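/- Suppose given two exact sequences of finitely generated abelian groups 0 → A → B → C → D → E → 0 and 0 → A' → B' → C' → D' → E' → 0, together with homomorphisms α : A → A', β : B → B', γ : C → C', δ : D → D', ε : E → E' making every square of the resulting ladder diagram commute. If A and A' are free abelian, α is an isomorphism, β is surjective, and C and C' are finite, then |tor(B)| · |tor(C')| · |tor(D)| · |tor(E')| = |tor(B')| · |tor(C)| · |tor(D')| · |tor(E)|. -/

import Mathlib

/-- The cardinality of the torsion subgroup of an abelian group. -/
noncomputable def torCard (G : Type*) [AddCommGroup G] : ℕ :=
  Nat.card (AddCommGroup.torsion G)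

/-!
For a surjection `p : G → H` with finite kernel, `tor G = p⁻¹(tor H)`, hence
`|tor G| = |ker p| · |tor H|`. Applied to `β`, `j` and `j'` (whose kernels
`im h`, `im h'` are finite), together with `|C| = |im g| · |im h|` for the finite groups `C`, `C'`,
this reduces the identity to `|im g| = |ker β| · |im g'|`. That is an index computation in `B`:
the kernel of `g' ∘ β` is `ker β + ker g` with `ker β ∩ ker g = 0` (because `α` is bijective and
`f'` injective), while its image is `im g'` since `β` is onto.
-/

namespace AddCommGroup

theorem comap_torsion_of_finite_ker {G H : Type*} [AddCommGroup G] [AddCommGroup H]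
    (p : G →+ H) [Finite p.ker] : (torsion H).comap p = torsion G := by
  refine le_antisymm (fun x hx => ?_) (le_comap_torsion p)
  obtain ⟨n, hn, hnx⟩ := isOfFinAddOrder_iff_nsmul_eq_zero.mp hx
  have hker : n • x ∈ p.ker := by rwa [AddMonoidHom.mem_ker, map_nsmul]
  have hnx_tor : IsOfFinAddOrder (n • x) :=
    AddSubmonoid.isOfFinAddOrder_coe.mpr (isOfFinAddOrder_of_finite (⟨_, hker⟩ : p.ker))
  exact hnx_tor.of_nsmul hn.ne'

end AddCommGroup

theorem AddSubgroup.card_comap_of_surjective {G H : Type*} [AddGroup G] [AddGroup H]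
    {p : G →+ H} (hp : Function.Surjective p) (S : AddSubgroup H) :
    Nat.card (S.comap p) = Nat.card p.ker * Nat.card S := by
  rw [← relIndex_bot_left, ← relIndex_mul_relIndex _ _ _ bot_le (AddMonoidHom.ker_le_comap p S),
    relIndex_bot_left, relIndex_ker, map_comap_eq_self_of_surjective hp]

theorem torCard_eq_card_ker_mul_torCard {G H : Type*} [AddCommGroup G] [AddCommGroup H]
    (p : G →+ H) (hp : Function.Surjective p) [Finite p.ker] :
    torCard G = Nat.card p.ker * torCard H := by
  rw [torCard, ← AddCommGroup.comap_torsion_of_finite_ker p,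
    AddSubgroup.card_comap_of_surjective hp]
  rfl

theorem torCard_eq_card (G : Type*) [AddCommGroup G] [Finite G] : torCard G = Nat.card G := by
  rw [torCard, AddCommGroup.torsion_eq_top_iff.mpr isAddTorsion_of_finite,
    AddSubgroup.card_top]

instance AddMonoidHom.finite_range {G H : Type*} [AddGroup G] [AddGroup H] [Finite G]
    (f : G →+ H) : Finite f.range :=
  (Set.finite_range f).to_subtype

namespace Function.Exact

variable {B C D : Type*}

theorem card_eq_card_range_mul_card_range [AddGroup B] [AddGroup C] [AddGroup D]
    {g : B →+ C} {h : C →+ D} (hgh : Exact g h) :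
    Nat.card C = Nat.card g.range * Nat.card h.range := by
  rw [← AddSubgroup.card_mul_index h.ker, AddSubgroup.index_ker, hgh.addMonoidHom_ker_eq]

theorem torCard_eq_card_range_mul_torCard [AddCommGroup B] [AddCommGroup C] [AddCommGroup D]
    {g : B →+ C} {h : C →+ D} (hgh : Exact g h) (hh : Surjective h) [Finite g.range] :
    torCard C = Nat.card g.range * torCard D := by
  have : Finite h.ker := hgh.addMonoidHom_ker_eq ▸ inferInstance
  rw [torCard_eq_card_ker_mul_torCard h hh, hgh.addMonoidHom_ker_eq]

end Function.Exact

section Ladder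

variable {A B C A' B' C' : Type*} [AddCommGroup A] [AddCommGroup B] [AddCommGroup C]
  [AddCommGroup A'] [AddCommGroup B'] [AddCommGroup C']
  {f : A →+ B} {g : B →+ C} {f' : A' →+ B'} {g' : B' →+ C'} {α : A →+ A'} {β : B →+ B'}

theorem ker_comp_eq_ker_sup_ker (hfg : Function.Exact f g) (hfg' : Function.Exact f' g')
    (sq : f'.comp α = β.comp f) (hα : Function.Surjective α) :
    (g'.comp β).ker = β.ker ⊔ g.ker := by
  refine le_antisymm (fun b hb => ?_) (sup_le (fun b hb => ?_) ?_)
  · obtain ⟨a', ha'⟩ := (hfg' (β b)).mp hb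
    obtain ⟨a, rfl⟩ := hα a'
    have hβb : β (b - f a) = 0 := by
      rw [map_sub, ← ha', ← AddMonoidHom.comp_apply, sq, AddMonoidHom.comp_apply, sub_self]
    rw [← sub_add_cancel b (f a)]
    exact AddSubgroup.add_mem_sup hβb ((hfg (f a)).mpr ⟨a, rfl⟩)
  · rw [AddMonoidHom.mem_ker, AddMonoidHom.comp_apply, AddMonoidHom.mem_ker.mp hb, map_zero]
  · rw [hfg.addMonoidHom_ker_eq]
    rintro _ ⟨a, rfl⟩
    rw [AddMonoidHom.mem_ker, AddMonoidHom.comp_apply, ← AddMonoidHom.comp_apply β, ← sq]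
    exact hfg'.apply_apply_eq_zero (α a)

theorem ker_inf_ker_eq_bot (hfg : Function.Exact f g) (hf' : Function.Injective f')
    (sq : f'.comp α = β.comp f) (hα : Function.Injective α) : g.ker ⊓ β.ker = ⊥ := by
  refine eq_bot_iff.mpr fun b ⟨hgb, hβb⟩ => ?_
  obtain ⟨a, rfl⟩ := (hfg b).mp hgb
  have : (f'.comp α) a = 0 := by rwa [sq]
  rw [(injective_iff_map_eq_zero (f'.comp α)).mp (hf'.comp hα) a this, map_zero]
  exact zero_mem _

theorem card_range_eq_card_ker_mul_card_range (hfg : Function.Exact f g)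
    (hfg' : Function.Exact f' g') (hf' : Function.Injective f') (sq : f'.comp α = β.comp f)
    (hα : Function.Bijective α) (hβ : Function.Surjective β) :
    Nat.card g.range = Nat.card β.ker * Nat.card g'.range := by
  have hker := ker_comp_eq_ker_sup_ker hfg hfg' sq hα.2
  have hindex : (g'.comp β).ker.index = Nat.card g'.range := by
    rw [← AddMonoidHom.comap_ker, AddSubgroup.index_comap_of_surjective _ hβ,
      AddSubgroup.index_ker]
  calc Nat.card g.range
      = g.ker.relIndex (g'.comp β).ker * (g'.comp β).ker.index := by
        rw [AddSubgroup.relIndex_mul_index (hker ▸ le_sup_right), AddSubgroup.index_ker]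
    _ = Nat.card β.ker * Nat.card g'.range := by
        rw [hindex, hker, AddSubgroup.relIndex_sup_right, ← AddSubgroup.inf_relIndex_right,
          ker_inf_ker_eq_bot hfg hf' sq hα.1, AddSubgroup.relIndex_bot_left]

end Ladder

theorem torsion_card_of_ladder_general
    {A B C D E A' B' C' D' E' : Type*}
    [AddCommGroup A] [AddCommGroup B] [AddCommGroup C] [AddCommGroup D] [AddCommGroup E]
    [AddCommGroup A'] [AddCommGroup B'] [AddCommGroup C'] [AddCommGroup D'] [AddCommGroup E']
    (f : A →+ B) (g : B →+ C) (h : C →+ D) (j : D →+ E)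
    (f' : A' →+ B') (g' : B' →+ C') (h' : C' →+ D') (j' : D' →+ E')
    (α : A →+ A') (β : B →+ B')
    (hfg : Function.Exact f g) (hgh : Function.Exact g h)
    (hhj : Function.Exact h j) (hj : Function.Surjective j)
    (hf' : Function.Injective f') (hfg' : Function.Exact f' g') (hgh' : Function.Exact g' h')
    (hhj' : Function.Exact h' j') (hj' : Function.Surjective j')
    (sq1 : f'.comp α = β.comp f)
    (hα : Function.Bijective α) (hβ : Function.Surjective β)
    (hC : Finite C) (hC' : Finite C') :
    torCard B * torCard C' * torCard D * torCard E' =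
      torCard B' * torCard C * torCard D' * torCard E := by
  have hrange := card_range_eq_card_ker_mul_card_range hfg hfg' hf' sq1 hα hβ
  have : Finite β.ker :=
    Nat.finite_of_card_ne_zero (left_ne_zero_of_mul (hrange ▸ Nat.card_pos.ne'))
  rw [torCard_eq_card_ker_mul_torCard β hβ, torCard_eq_card C, torCard_eq_card C',
    hgh.card_eq_card_range_mul_card_range, hgh'.card_eq_card_range_mul_card_range,
    hhj.torCard_eq_card_range_mul_torCard hj, hhj'.torCard_eq_card_range_mul_torCard hj', hrange]
  ring

/-- **Lemma on torsion in a ladder of exact sequences.**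
Given two exact sequences of finitely generated abelian groups
`0 → A → B → C → D → E → 0` and `0 → A' → B' → C' → D' → E' → 0` and a commuting ladder
of homomorphisms `α, β, γ, δ, ε` between them, if `A, A'` are free, `α` is an isomorphism,
`β` is surjective, and `C, C'` are finite, then
`|tor B| · |tor C'| · |tor D| · |tor E'| = |tor B'| · |tor C| · |tor D'| · |tor E|`. -/
theorem torsion_card_of_ladder
    {A B C D E A' B' C' D' E' : Type*}
    [AddCommGroup A] [AddCommGroup B] [AddCommGroup C] [AddCommGroup D] [AddCommGroup E]
    [AddCommGroup A'] [AddCommGroup B'] [AddCommGroup C'] [AddCommGroup D'] [AddCommGroup E']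
    [AddGroup.FG A] [AddGroup.FG B] [AddGroup.FG C] [AddGroup.FG D] [AddGroup.FG E]
    [AddGroup.FG A'] [AddGroup.FG B'] [AddGroup.FG C'] [AddGroup.FG D'] [AddGroup.FG E']
    [Module.Free ℤ A] [Module.Free ℤ A']
    (f : A →+ B) (g : B →+ C) (h : C →+ D) (j : D →+ E)
    (f' : A' →+ B') (g' : B' →+ C') (h' : C' →+ D') (j' : D' →+ E')
    (α : A →+ A') (β : B →+ B') (γ : C →+ C') (δ : D →+ D') (ε : E →+ E')
    (hf : Function.Injective f) (hfg : Function.Exact f g) (hgh : Function.Exact g h)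
    (hhj : Function.Exact h j) (hj : Function.Surjective j)
    (hf' : Function.Injective f') (hfg' : Function.Exact f' g') (hgh' : Function.Exact g' h')
    (hhj' : Function.Exact h' j') (hj' : Function.Surjective j')
    (sq1 : f'.comp α = β.comp f) (sq2 : g'.comp β = γ.comp g)
    (sq3 : h'.comp γ = δ.comp h) (sq4 : j'.comp δ = ε.comp j)
    (hα : Function.Bijective α) (hβ : Function.Surjective β)
    (hC : Finite C) (hC' : Finite C') :
    torCard B * torCard C' * torCard D * torCard E' =
      torCard B' * torCard C * torCard D' * torCard E :=
  torsion_card_of_ladder_general f g h j f' g' h' j' α β hfg hgh hhj hj hf' hfg' hgh' hhj' hj' sq1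
    hα hβ hC hC'
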